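/- Let M, N ≥ 1, let r : {1,…,M}×{1,…,N} → {0,1}, and for each x let I_x = Σ_{y=1}^N r(x,y), assumed to satisfy I_x ≥ 1 for all x. Then for every o : {1,…,M}×{1,…,N} → ℝ the following exact identity holds: Σ_{(x,y): r(x,y)=1} ( −o(x,y) + (1/(2N)) Σ_{y'=1}^N (o(x,y') + 1)² − (1/(2N²)) (Σ_{y'=1}^N o(x,y'))² ) = Σ_{x=1}^M Σ_{y=1}^N (I_x/(2N)) ( ( o(x,y) + 1 − r(x,y)·N/I_x )² − (1/N²) (Σ_{y'=1}^N o(x,y'))² ) + Σ_{x=1}^M I_x − M·N/2. -/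

import Mathlib

/-!
Row by row, the positive pairs select `∑ y, r y * (⋯)`, and since `r` is `0/1`-valued,
`r² = r`, so expanding `(o + 1 - r N / I)²` leaves `(o + 1)²`, the cross term
`-2 (N / I) r (o + 1)` and `(N / I)² r`; weighted by `I / (2N)` and summed over `y` these give
the surrogate up to the constant `-I + N / 2` per row.
-/

open Finset

variable {ι : Type*}

theorem sum_filter_eq_one_eq_sum_mul (s : Finset ι) {r : ι → ℝ}
    (hr : ∀ y, r y = 0 ∨ r y = 1) (f : ι → ℝ) :
    ∑ y ∈ s.filter (r · = 1), f y = ∑ y ∈ s, r y * f y := by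
  rw [sum_filter]
  refine sum_congr rfl fun y _ => ?_
  rcases hr y with h | h <;> simp [h]

theorem sum_sub_mul_sq_of_eq_zero_or_one [Fintype ι] {r : ι → ℝ} (hr : ∀ y, r y = 0 ∨ r y = 1)
    (a : ι → ℝ) (c : ℝ) :
    ∑ y, (a y - r y * c) ^ 2 = ∑ y, a y ^ 2 - 2 * c * ∑ y, r y * a y + c ^ 2 * ∑ y, r y := by
  have h_expand : ∀ y, (a y - r y * c) ^ 2 = a y ^ 2 - 2 * c * (r y * a y) + c ^ 2 * r y := by
    intro y
    rcases hr y with h | h <;> rw [h] <;> ring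
  simp only [h_expand, sum_add_distrib, sum_sub_distrib, ← mul_sum]

theorem rgx_row_identity [Fintype ι] {r : ι → ℝ} (hr : ∀ y, r y = 0 ∨ r y = 1)
    (hI : ∑ y, r y ≠ 0) (o : ι → ℝ) :
    ∑ y ∈ univ.filter (r · = 1),
        (-o y + (1 / (2 * Fintype.card ι)) * ∑ y', (o y' + 1) ^ 2
          - (1 / (2 * (Fintype.card ι : ℝ) ^ 2)) * (∑ y', o y') ^ 2)
      = (∑ y, ((∑ y', r y') / (2 * Fintype.card ι)) *
            ((o y + 1 - r y * Fintype.card ι / ∑ y', r y') ^ 2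
              - (1 / (Fintype.card ι : ℝ) ^ 2) * (∑ y', o y') ^ 2))
        + ∑ y, r y - Fintype.card ι / 2 := by
  have hN : (Fintype.card ι : ℝ) ≠ 0 := by
    obtain ⟨y, -, -⟩ := exists_ne_zero_of_sum_ne_zero hI
    exact Nat.cast_ne_zero.mpr (Fintype.card_pos_iff.mpr ⟨y⟩).ne'
  have h_shift : ∑ y, r y * (o y + 1) = ∑ y, r y * o y + ∑ y, r y := by
    simp only [mul_add_one, sum_add_distrib]
  have h_sq : ∑ y, (o y + 1 - r y * Fintype.card ι / ∑ y', r y') ^ 2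
      = ∑ y, (o y + 1) ^ 2 - 2 * (Fintype.card ι / ∑ y', r y') * ∑ y, r y * (o y + 1)
        + (Fintype.card ι / ∑ y', r y') ^ 2 * ∑ y, r y := by
    simpa only [mul_div_assoc] using sum_sub_mul_sq_of_eq_zero_or_one hr (o · + 1) _
  rw [sum_filter_eq_one_eq_sum_mul _ hr, ← mul_sum, sum_sub_distrib, h_sq, h_shift]
  simp only [mul_add, mul_sub, sum_add_distrib, sum_sub_distrib, ← sum_mul, sum_const,
    card_univ, nsmul_eq_mul, mul_neg, sum_neg_distrib]
  field_simp
  ring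

theorem rgx_squared_form_transformation_general (M N : ℕ)
    (r : Fin M → Fin N → ℝ) (hr : ∀ x y, r x y = 0 ∨ r x y = 1)
    (hI : ∀ x, 1 ≤ ∑ y, r x y) (o : Fin M → Fin N → ℝ) :
    ∑ x, ∑ y ∈ Finset.univ.filter (fun y => r x y = 1),
        (- o x y + (1 / (2 * N)) * ∑ y', (o x y' + 1) ^ 2
          - (1 / (2 * (N : ℝ) ^ 2)) * (∑ y', o x y') ^ 2)
      = (∑ x, ∑ y, ((∑ y', r x y') / (2 * N)) *
            ((o x y + 1 - r x y * N / (∑ y', r x y')) ^ 2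
              - (1 / (N : ℝ) ^ 2) * (∑ y', o x y') ^ 2))
        + (∑ x, ∑ y, r x y) - M * N / 2 := by
  have h_row x := rgx_row_identity (hr x) (zero_lt_one.trans_le (hI x)).ne' (o x)
  simp only [Fintype.card_fin] at h_row
  rw [sum_congr rfl fun x _ => h_row x, sum_sub_distrib, sum_add_distrib, sum_const,
    card_univ, Fintype.card_fin, nsmul_eq_mul]
  ring

/-- for `r : {1,…,M}×{1,…,N} → {0,1}` with `I_x = ∑_y r(x,y) ≥ 1`, and
any `o`, the realized RG× surrogate (with the interaction term retained) summed over the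
positive pairs equals the weighted squared loss with interaction correction plus an
explicit constant:
`∑_{(x,y): r(x,y)=1} (-o(x,y) + (1/(2N)) ∑_{y'} (o(x,y')+1)² - (1/(2N²)) (∑_{y'} o(x,y'))²)
  = ∑_x ∑_y (I_x/(2N)) ((o(x,y) + 1 - r(x,y) N / I_x)² - (1/N²)(∑_{y'} o(x,y'))²)
    + ∑_x I_x - M N / 2`. -/
theorem rgx_squared_form_transformation (M N : ℕ) (hM : 1 ≤ M) (hN : 1 ≤ N)
    (r : Fin M → Fin N → ℝ) (hr : ∀ x y, r x y = 0 ∨ r x y = 1)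
    (hI : ∀ x, 1 ≤ ∑ y, r x y) (o : Fin M → Fin N → ℝ) :
    ∑ x, ∑ y ∈ Finset.univ.filter (fun y => r x y = 1),
        (- o x y + (1 / (2 * N)) * ∑ y', (o x y' + 1) ^ 2
          - (1 / (2 * (N : ℝ) ^ 2)) * (∑ y', o x y') ^ 2)
      = (∑ x, ∑ y, ((∑ y', r x y') / (2 * N)) *
            ((o x y + 1 - r x y * N / (∑ y', r x y')) ^ 2
              - (1 / (N : ℝ) ^ 2) * (∑ y', o x y') ^ 2))
        + (∑ x, ∑ y, r x y) - M * N / 2 :=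
  rgx_squared_form_transformation_general M N r hr hI o
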